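/- For any equivariant sheaf (r : R → X_T, ρ) on the topological groupoid G_T ⇉ X_T and any point x₀ ∈ R, there exist an L-formula ξ with n free variables and a continuous map v̂ : ⟦ξ⟧ → R over X_T (i.e. r ∘ v̂ = π₁) which is equivariant, meaning v̂(θ_ξ((M,N,f), p)) = ρ((M,N,f), v̂(p)) for every composable pair, and which has x₀ in its image. (Hence the definable equivariant sheaves generate: every equivariant sheaf is covered by morphisms from definable ones.) -/

import Mathlib

/-!
Let `σ` be a local section of `r` through `x₀`. Continuity of `ρ` at `(id, x₀)` yields a basic
open `⟨Ψ, a⃗⟩ ∋ r x₀` with `ρ(f, σ M) = σ N` for every isomorphism `f : M ≅ N` between models in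
`⟨Ψ, a⃗⟩` that fixes `a⃗`. Let `ξ` be `Ψ` together with the equality type of `a⃗`. Transporting a
model along a permutation of `α` shows that every `(N, c⃗) ∈ ⟦ξ⟧` is the image of `a⃗` under some
`f : A ≅ N` with `A ∈ ⟨Ψ, a⃗⟩`; put `v̂(N, c⃗) = ρ(f, σ A)`. This is independent of `f` by the
invariance of `σ`, equivariant because `ρ` is an action, and continuous because the same
permutation trick carries a basic neighbourhood of `(f, σ A)` to one of `(N, c⃗)`.
-/

open FirstOrder FirstOrder.Language Set Topology

universe u v w x

variable {L : FirstOrder.Language.{u, v}} {α : Type w}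

/-- A model of `T` whose carrier is a subset of `α`: an element of the set `X_T` of
small models of `T`. -/
structure SmallModel (L : FirstOrder.Language.{u, v}) (α : Type w) (T : L.Theory) where
  carrier : Set α
  struc : L.Structure carrier
  models : @FirstOrder.Language.Theory.Model L carrier struc T

/-- `M.Sat φ v` means that the formula `φ` is realized in the small model `M`
at the valuation `v`. -/
def SmallModel.Sat {T : L.Theory} (M : SmallModel L α T) {ι : Type*}
    (φ : L.Formula ι) (v : ι → M.carrier) : Prop :=
  letI := M.struc
  φ.Realize v

/-- The basic open set `⟨φ, b⟩ ⊆ X_T`. -/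
def XBasic {T : L.Theory} {n : ℕ} (φ : L.Formula (Fin n)) (b : Fin n → α) :
    Set (SmallModel L α T) :=
  {M | ∃ h : ∀ i, b i ∈ M.carrier, M.Sat φ fun i => ⟨b i, h i⟩}

/-- The logical topology on `X_T`, generated by the sets `⟨φ, b⟩`. -/
instance SmallModel.instTopologicalSpace {T : L.Theory} :
    TopologicalSpace (SmallModel L α T) :=
  TopologicalSpace.generateFrom
    {U | ∃ (n : ℕ) (φ : L.Formula (Fin n)) (b : Fin n → α), U = XBasic φ b}

/-- A point of the sheaf `⟦φ⟧`: a model `M ∈ X_T` together with a tuple from its carrier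
realizing `φ`. -/
structure SheafPt {L : FirstOrder.Language.{u, v}} {α : Type w} (T : L.Theory)
    {n : ℕ} (φ : L.Formula (Fin n)) where
  model : SmallModel L α T
  elem : Fin n → model.carrier
  sat : model.Sat φ elem

/-- The basic open set `⟨ψ, b⟩ ⊆ ⟦φ⟧`. -/
def sheafBasic {T : L.Theory} {n : ℕ} (φ : L.Formula (Fin n)) {m : ℕ}
    (ψ : L.Formula (Fin n ⊕ Fin m)) (b : Fin m → α) :
    Set (SheafPt (α := α) T φ) :=
  {p | ∃ h : ∀ i, b i ∈ p.model.carrier,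
        p.model.Sat ψ (Sum.elim p.elem fun i => ⟨b i, h i⟩)}

/-- The logical topology on `⟦φ⟧`, generated by the sets `⟨ψ, b⟩`. -/
instance SheafPt.instTopologicalSpace {T : L.Theory} {n : ℕ} (φ : L.Formula (Fin n)) :
    TopologicalSpace (SheafPt (α := α) T φ) :=
  TopologicalSpace.generateFrom
    {U | ∃ (m : ℕ) (ψ : L.Formula (Fin n ⊕ Fin m)) (b : Fin m → α), U = sheafBasic φ ψ b}

/-- Isomorphisms of `L`-structures between two small models. -/
abbrev StrEquiv {T : L.Theory} (A B : SmallModel L α T) : Type _ :=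
  @FirstOrder.Language.Equiv L A.carrier B.carrier A.struc B.struc

/-- The underlying function of an isomorphism of small models. -/
def StrEquiv.fn {T : L.Theory} {A B : SmallModel L α T} (f : StrEquiv A B) :
    A.carrier → B.carrier :=
  (@FirstOrder.Language.Equiv.toEquiv L A.carrier B.carrier A.struc B.struc f)

/-- Composition of isomorphisms of small models. -/
def StrEquiv.comp {T : L.Theory} {A B C : SmallModel L α T}
    (g : StrEquiv B C) (f : StrEquiv A B) : StrEquiv A C :=
  letI := A.struc; letI := B.struc; letI := C.struc
  FirstOrder.Language.Equiv.comp g f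

/-- An element of `G_T`: a triple `(M, N, f)` with `M, N ∈ X_T` and `f : M ≅ N` an
isomorphism of `L`-structures. -/
structure ModelIso (L : FirstOrder.Language.{u, v}) (α : Type w) (T : L.Theory) where
  src : SmallModel L α T
  tgt : SmallModel L α T
  iso : StrEquiv src tgt

/-- The basic open set `⟨a ↦ b⟩ ⊆ G_T`. -/
def GMapsTo {T : L.Theory} (a b : α) : Set (ModelIso L α T) :=
  {g | ∃ h : a ∈ g.src.carrier, (StrEquiv.fn g.iso ⟨a, h⟩ : α) = b}

/-- The logical topology on `G_T`, generated by the sets `s⁻¹⟨φ, b⟩`, `t⁻¹⟨φ, b⟩` and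
`⟨a ↦ b⟩`. -/
instance ModelIso.instTopologicalSpace {T : L.Theory} :
    TopologicalSpace (ModelIso L α T) :=
  TopologicalSpace.generateFrom
    ({U | ∃ (n : ℕ) (φ : L.Formula (Fin n)) (b : Fin n → α),
        U = ModelIso.src ⁻¹' XBasic φ b} ∪
     {U | ∃ (n : ℕ) (φ : L.Formula (Fin n)) (b : Fin n → α),
        U = ModelIso.tgt ⁻¹' XBasic φ b} ∪
     {U | ∃ a b : α, U = GMapsTo (T := T) a b})

/-- The identity arrow of `G_T` at a model `M`. -/
def ModelIso.idIso {T : L.Theory} (M : SmallModel L α T) : ModelIso L α T :=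
  ⟨M, M, letI := M.struc; FirstOrder.Language.Equiv.refl L M.carrier⟩

/-- The inverse of an arrow of `G_T`. -/
def ModelIso.invIso {T : L.Theory} (g : ModelIso L α T) : ModelIso L α T :=
  ⟨g.tgt, g.src, letI := g.src.struc; letI := g.tgt.struc;
    FirstOrder.Language.Equiv.symm g.iso⟩

/-- An element of `G_T ×_{X_T} ⟦φ⟧`: an arrow `(M,N,f)` of `G_T` together with a point
`(M, a⃗)` of `⟦φ⟧` lying over its source. -/
structure ActionPt {L : FirstOrder.Language.{u, v}} {α : Type w} (T : L.Theory)
    {n : ℕ} (φ : L.Formula (Fin n)) where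
  g : ModelIso L α T
  elem : Fin n → g.src.carrier
  sat : g.src.Sat φ elem

/-- The point of `⟦φ⟧` over the source of the arrow. -/
def ActionPt.pt {T : L.Theory} {n : ℕ} {φ : L.Formula (Fin n)}
    (q : ActionPt (α := α) T φ) : SheafPt (α := α) T φ :=
  ⟨q.g.src, q.elem, q.sat⟩

/-- `G_T ×_{X_T} ⟦φ⟧` is topologized as a subspace of the product `G_T × ⟦φ⟧`. -/
instance ActionPt.instTopologicalSpace {T : L.Theory} {n : ℕ} {φ : L.Formula (Fin n)} :
    TopologicalSpace (ActionPt (α := α) T φ) :=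
  TopologicalSpace.induced (fun q => (q.g, q.pt)) inferInstance

/-- The action `θ_φ : G_T ×_{X_T} ⟦φ⟧ → ⟦φ⟧`, `θ_φ((M,N,f), (M, a⃗)) = (N, f(a⃗))`. -/
def theta {T : L.Theory} {n : ℕ} (φ : L.Formula (Fin n))
    (q : ActionPt (α := α) T φ) : SheafPt (α := α) T φ where
  model := q.g.tgt
  elem := fun i => StrEquiv.fn q.g.iso (q.elem i)
  sat := by
    letI := q.g.src.struc
    letI := q.g.tgt.struc
    have h := q.sat
    have heq : (fun i => StrEquiv.fn q.g.iso (q.elem i)) = ⇑q.g.iso ∘ q.elem := rfl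
    show Formula.Realize (M := q.g.tgt.carrier) φ _
    rw [heq]
    exact (StrongHomClass.realize_formula q.g.iso φ).mpr h

/-- An equivariant sheaf `(r : R → X_T, ρ)` on the topological groupoid `G_T ⇉ X_T`:
a local homeomorphism `r` into `X_T` together with a continuous action `ρ` of `G_T`. -/
structure EquivSheaf (L : FirstOrder.Language.{u, v}) (α : Type w) (T : L.Theory) where
  /-- The total space. -/
  R : Type x
  [topR : TopologicalSpace R]
  /-- The projection to the space of models. -/
  r : R → SmallModel L α T
  isLocalHomeomorph_r : IsLocalHomeomorph r
  /-- The action `ρ : G_T ×_{X_T} R → R`, defined on the set of pairs `((M,N,f), z)`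
  with `r z = M`, topologized as a subspace of the product. -/
  act : {q : ModelIso L α T × R // r q.2 = q.1.src} → R
  continuous_act : Continuous act
  r_act : ∀ q, r (act q) = q.1.1.tgt
  act_id : ∀ z : R, act ⟨(ModelIso.idIso (r z), z), rfl⟩ = z
  act_comp : ∀ (A B C : SmallModel L α T) (f : StrEquiv A B) (g : StrEquiv B C)
      (z : R) (hz : r z = A),
    act ⟨((⟨B, C, g⟩ : ModelIso L α T),
          act ⟨((⟨A, B, f⟩ : ModelIso L α T), z), hz⟩), r_act _⟩ =
      act ⟨((⟨A, C, StrEquiv.comp g f⟩ : ModelIso L α T), z), hz⟩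

attribute [instance] EquivSheaf.topR

namespace SmallModel

variable {T : L.Theory} {M : SmallModel L α T} {ι : Type*}

theorem sat_inf {φ ψ : L.Formula ι} {v : ι → M.carrier} :
    M.Sat (φ ⊓ ψ) v ↔ M.Sat φ v ∧ M.Sat ψ v :=
  let _ := M.struc; Formula.realize_inf

theorem sat_top {v : ι → M.carrier} : M.Sat (⊤ : L.Formula ι) v :=
  let _ := M.struc; Formula.realize_top.mpr trivial

theorem sat_relabel {κ : Type*} {φ : L.Formula ι} {g : ι → κ} {v : κ → M.carrier} :
    M.Sat (φ.relabel g) v ↔ M.Sat φ (v ∘ g) :=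
  let _ := M.struc; Formula.realize_relabel

theorem sat_iInf {κ : Type*} [Finite κ] {φ : κ → L.Formula ι} {v : ι → M.carrier} :
    M.Sat (Formula.iInf φ) v ↔ ∀ k, M.Sat (φ k) v :=
  let _ := M.struc; Formula.realize_iInf

theorem sat_not {φ : L.Formula ι} {v : ι → M.carrier} : M.Sat φ.not v ↔ ¬ M.Sat φ v :=
  let _ := M.struc; Formula.realize_not

theorem sat_equal {i j : ι} {v : ι → M.carrier} :
    M.Sat (Term.equal (L := L) (Term.var i) (Term.var j)) v ↔ v i = v j :=
  let _ := M.struc; Formula.realize_equal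

theorem sat_congr {φ : L.Formula ι} {v w : ι → M.carrier} (h : ∀ i, (v i : α) = w i) :
    M.Sat φ v ↔ M.Sat φ w := by
  rw [funext fun i => Subtype.ext (h i)]

theorem mem_XBasic_top : M ∈ XBasic (⊤ : L.Formula (Fin 0)) (Fin.elim0 : Fin 0 → α) :=
  ⟨fun i => i.elim0, sat_top⟩

end SmallModel

namespace StrEquiv

variable {T : L.Theory} {A B C : SmallModel L α T}

def symm (f : StrEquiv A B) : StrEquiv B A :=
  letI := A.struc; letI := B.struc
  FirstOrder.Language.Equiv.symm f

theorem fn_injective (f : StrEquiv A B) : Function.Injective f.fn :=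
  let _ := A.struc; let _ := B.struc
  f.toEquiv.injective

theorem fn_symm_fn (f : StrEquiv A B) (x : A.carrier) : f.symm.fn (f.fn x) = x :=
  let _ := A.struc; let _ := B.struc
  f.toEquiv.symm_apply_apply x

theorem comp_symm_comp (f : StrEquiv A C) (g : StrEquiv B C) : g.comp (g.symm.comp f) = f := by
  let _ := A.struc; let _ := B.struc; let _ := C.struc
  change Language.Equiv.comp g (Language.Equiv.comp (Language.Equiv.symm g) f) = f
  rw [← Language.Equiv.comp_assoc, Language.Equiv.self_comp_symm, Language.Equiv.refl_comp]

theorem sat_comp_iff {ι : Type*} (f : StrEquiv A B) {φ : L.Formula ι} {v : ι → A.carrier} :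
    B.Sat φ (f.fn ∘ v) ↔ A.Sat φ v :=
  let _ := A.struc; let _ := B.struc
  StrongHomClass.realize_formula f φ

def MapsTo (f : StrEquiv A B) {ι : Type*} (s t : ι → α) : Prop :=
  ∀ i, ∃ h : s i ∈ A.carrier, (f.fn ⟨s i, h⟩ : α) = t i

variable {ι : Type*} {f : StrEquiv A B} {s t : ι → α}

theorem mapsTo_coe (f : StrEquiv A B) (v : ι → A.carrier) :
    f.MapsTo (fun i => (v i : α)) (fun i => (f.fn (v i) : α)) :=
  fun i => ⟨(v i).2, rfl⟩

theorem MapsTo.mem (h : f.MapsTo s t) (i : ι) : t i ∈ B.carrier := by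
  obtain ⟨_, e⟩ := h i
  exact e ▸ Subtype.property _

theorem MapsTo.comp {u : ι → α} {g : StrEquiv B C} (hf : f.MapsTo s t) (hg : g.MapsTo t u) :
    (g.comp f).MapsTo s u := by
  intro i
  obtain ⟨hs, hst⟩ := hf i
  obtain ⟨ht, htu⟩ := hg i
  have hfs : f.fn ⟨s i, hs⟩ = ⟨t i, ht⟩ := Subtype.ext hst
  exact ⟨hs, (congrArg (fun y => (g.fn y : α)) hfs).trans htu⟩

theorem MapsTo.symm (h : f.MapsTo s t) : f.symm.MapsTo t s := by
  intro i
  obtain ⟨hs, hst⟩ := h i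
  refine ⟨h.mem i, ?_⟩
  rw [show (⟨t i, h.mem i⟩ : B.carrier) = f.fn ⟨s i, hs⟩ from Subtype.ext hst.symm, fn_symm_fn]

theorem MapsTo.eq_iff (h : f.MapsTo s t) (i j : ι) : s i = s j ↔ t i = t j := by
  obtain ⟨hi, hti⟩ := h i
  obtain ⟨hj, htj⟩ := h j
  rw [← hti, ← htj, Subtype.val_inj, f.fn_injective.eq_iff, Subtype.mk.injEq]

theorem MapsTo.mem_XBasic_iff {n : ℕ} {s t : Fin n → α} (h : f.MapsTo s t)
    (φ : L.Formula (Fin n)) : A ∈ XBasic φ s ↔ B ∈ XBasic φ t := by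
  refine ⟨fun ⟨_, hA⟩ => ⟨h.mem, ?_⟩, fun ⟨_, hB⟩ => ⟨fun i => (h i).1, ?_⟩⟩
  · exact (B.sat_congr fun i => (h i).2).mp (f.sat_comp_iff.mpr hA)
  · exact f.sat_comp_iff.mp ((B.sat_congr fun i => (h i).2).mpr hB)

theorem mapsTo_sumElim {κ : Type*} {s' t' : κ → α} :
    f.MapsTo (Sum.elim s s') (Sum.elim t t') ↔ f.MapsTo s t ∧ f.MapsTo s' t' :=
  Sum.forall

theorem mapsTo_append {m n : ℕ} {s t : Fin m → α} {s' t' : Fin n → α} :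
    f.MapsTo (Fin.append s s') (Fin.append t t') ↔ f.MapsTo s t ∧ f.MapsTo s' t' := by
  simp only [MapsTo, Fin.forall_fin_add, Fin.append_left, Fin.append_right]

end StrEquiv

theorem ModelIso.eq_of_idIso_mapsTo {T : L.Theory} {M : SmallModel L α T} {ι : Type*}
    {s t : ι → α} (h : (ModelIso.idIso M).iso.MapsTo s t) : s = t :=
  funext fun i => (h i).2

theorem TopologicalSpace.exists_subset_of_mem_open_generateFrom {X : Type*} {S B : Set (Set X)}
    (hSB : S ⊆ B) (hB : FiniteInter B) {u : Set X} (hu : IsOpen[generateFrom S] u) {x : X}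
    (hx : x ∈ u) : ∃ t ∈ B, x ∈ t ∧ t ⊆ u :=
  letI := generateFrom B
  (isTopologicalBasis_of_subbasis_of_finiteInter rfl hB).exists_subset_of_mem_open hx
    (generateFrom_anti hSB _ hu)

section BasicSets

variable {T : L.Theory}

theorem XBasic_inter {m n : ℕ} (φ : L.Formula (Fin m)) (b : Fin m → α) (ψ : L.Formula (Fin n))
    (c : Fin n → α) :
    XBasic (T := T) φ b ∩ XBasic ψ c =
      XBasic (φ.relabel (Fin.castAdd n) ⊓ ψ.relabel (Fin.natAdd m)) (Fin.append b c) := by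
  ext M
  simp only [mem_inter_iff, XBasic, mem_ofPred_eq, SmallModel.sat_inf, SmallModel.sat_relabel]
  constructor
  · rintro ⟨⟨hb, hφ⟩, hc, hψ⟩
    refine ⟨Fin.addCases (by simpa using hb) (by simpa using hc), ?_, ?_⟩
    · exact (M.sat_congr fun i => by simp).mp hφ
    · exact (M.sat_congr fun i => by simp).mp hψ
  · rintro ⟨h, hφ, hψ⟩
    exact ⟨⟨fun i => by simpa using h (Fin.castAdd n i), (M.sat_congr fun i => by simp).mpr hφ⟩,
      fun i => by simpa using h (Fin.natAdd m i), (M.sat_congr fun i => by simp).mpr hψ⟩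

variable (L α T) in
def xBasicSets : Set (Set (SmallModel L α T)) :=
  {U | ∃ (n : ℕ) (φ : L.Formula (Fin n)) (b : Fin n → α), U = XBasic φ b}

theorem finiteInter_xBasicSets : FiniteInter (xBasicSets L α T) where
  univ_mem := ⟨0, ⊤, Fin.elim0, (eq_univ_of_forall fun _ => SmallModel.mem_XBasic_top).symm⟩
  inter_mem := by
    rintro _ ⟨m, φ, b, rfl⟩ _ ⟨n, ψ, c, rfl⟩
    exact ⟨_, _, _, XBasic_inter φ b ψ c⟩

theorem isOpen_XBasic {n : ℕ} (φ : L.Formula (Fin n)) (b : Fin n → α) :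
    IsOpen (XBasic (T := T) φ b) :=
  TopologicalSpace.GenerateOpen.basic _ ⟨n, φ, b, rfl⟩

theorem exists_XBasic_subset {U : Set (SmallModel L α T)} (hU : IsOpen U) {M : SmallModel L α T}
    (hM : M ∈ U) :
    ∃ (n : ℕ) (φ : L.Formula (Fin n)) (b : Fin n → α), M ∈ XBasic φ b ∧ XBasic φ b ⊆ U := by
  obtain ⟨_, ⟨n, φ, b, rfl⟩, hMV, hVU⟩ := TopologicalSpace.exists_subset_of_mem_open_generateFrom
    subset_rfl finiteInter_xBasicSets hU hM
  exact ⟨n, φ, b, hMV, hVU⟩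

def GBasic (U V : Set (SmallModel L α T)) {l : ℕ} (s t : Fin l → α) : Set (ModelIso L α T) :=
  {g | g.src ∈ U ∧ g.tgt ∈ V ∧ g.iso.MapsTo s t}

variable (L α T) in
def gBasicSets : Set (Set (ModelIso L α T)) :=
  {G | ∃ U ∈ xBasicSets L α T, ∃ V ∈ xBasicSets L α T, ∃ (l : ℕ) (s t : Fin l → α),
    G = GBasic U V s t}

theorem finiteInter_gBasicSets : FiniteInter (gBasicSets L α T) where
  univ_mem := ⟨_, finiteInter_xBasicSets.univ_mem, _, finiteInter_xBasicSets.univ_mem, 0,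
    Fin.elim0, Fin.elim0, by ext; simp [GBasic, StrEquiv.MapsTo]⟩
  inter_mem := by
    rintro _ ⟨U₁, hU₁, V₁, hV₁, l₁, s₁, t₁, rfl⟩ _ ⟨U₂, hU₂, V₂, hV₂, l₂, s₂, t₂, rfl⟩
    refine ⟨_, finiteInter_xBasicSets.inter_mem hU₁ hU₂, _,
      finiteInter_xBasicSets.inter_mem hV₁ hV₂, _, Fin.append s₁ s₂, Fin.append t₁ t₂, ?_⟩
    ext g
    simp only [GBasic, mem_inter_iff, mem_ofPred_eq, StrEquiv.mapsTo_append]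
    tauto

theorem exists_GBasic_subset {W : Set (ModelIso L α T)} (hW : IsOpen W) {g : ModelIso L α T}
    (hg : g ∈ W) : ∃ G ∈ gBasicSets L α T, g ∈ G ∧ G ⊆ W := by
  refine TopologicalSpace.exists_subset_of_mem_open_generateFrom ?_ finiteInter_gBasicSets hW hg
  have huniv := finiteInter_xBasicSets (L := L) (α := α) (T := T) |>.univ_mem
  rintro _ ((⟨n, φ, b, rfl⟩ | ⟨n, φ, b, rfl⟩) | ⟨a, b, rfl⟩)
  · exact ⟨_, ⟨n, φ, b, rfl⟩, _, huniv, 0, Fin.elim0, Fin.elim0, by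
      ext; simp [GBasic, StrEquiv.MapsTo]⟩
  · exact ⟨_, huniv, _, ⟨n, φ, b, rfl⟩, 0, Fin.elim0, Fin.elim0, by
      ext; simp [GBasic, StrEquiv.MapsTo]⟩
  · exact ⟨_, huniv, _, huniv, 1, ![a], ![b], by ext; simp [GBasic, StrEquiv.MapsTo, GMapsTo]⟩

end BasicSets

section Transport

variable {T : L.Theory}

open Classical in
noncomputable def patternFormula {ι : Type*} [Finite ι] (d : ι → α) : L.Formula ι :=
  Formula.iInf fun p : ι × ι =>
    if d p.1 = d p.2 then Term.equal (Term.var p.1) (Term.var p.2)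
    else (Term.equal (Term.var p.1) (Term.var p.2)).not

theorem SmallModel.sat_patternFormula {M : SmallModel L α T} {ι : Type*} [Finite ι]
    {d : ι → α} {v : ι → M.carrier} :
    M.Sat (patternFormula d) v ↔ ∀ i j, d i = d j ↔ (v i : α) = v j := by
  simp only [patternFormula, sat_iInf, Prod.forall]
  refine forall₂_congr fun i j => ?_
  split_ifs with h <;> simp [sat_not, sat_equal, h, Subtype.ext_iff]

theorem exists_perm_apply_eq {ι : Type*} [Finite ι] {d d' : ι → α}
    (h : ∀ i j, d i = d j ↔ d' i = d' j) : ∃ π : Equiv.Perm α, ∀ i, π (d i) = d' i := by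
  have hchoose : ∀ x : range d, d x.2.choose = x := fun x => x.2.choose_spec
  let f : range d ↪ α := ⟨fun x => d' x.2.choose, fun x y hxy => Subtype.ext <| by
    rw [← hchoose x, ← hchoose y]; exact (h _ _).2 hxy⟩
  obtain ⟨π, hπ⟩ : ∃ π : α ≃ α, ∀ x : range d, π x = f x := by
    rcases finite_or_infinite α with hα | hα
    · exact Cardinal.extend_function_finite f ⟨Equiv.refl α⟩
    · exact Cardinal.extend_function_of_lt f
        ((Cardinal.lt_aleph0_of_finite _).trans_le (Cardinal.aleph0_le_mk α)) ⟨Equiv.refl α⟩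
  exact ⟨π, fun i => (hπ ⟨d i, mem_range_self i⟩).trans ((h _ _).1 (hchoose _))⟩

def permEquivSet (π : Equiv.Perm α) (s : Set α) : ↥(π ⁻¹' s) ≃ ↥s :=
  (π : α ≃ α).subtypeEquiv fun _ => Iff.rfl

noncomputable def permModel (π : Equiv.Perm α) (N : SmallModel L α T) : SmallModel L α T where
  carrier := π ⁻¹' N.carrier
  struc := letI := N.struc; (permEquivSet π N.carrier).symm.inducedStructure
  models := by
    let _ := N.struc
    let _ : L.Structure (π ⁻¹' N.carrier) := (permEquivSet π N.carrier).symm.inducedStructure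
    have := N.models
    exact StrongHomClass.theory_model (permEquivSet π N.carrier).symm.inducedStructureEquiv

noncomputable def permIso (π : Equiv.Perm α) (N : SmallModel L α T) :
    StrEquiv (permModel π N) N :=
  letI := N.struc
  letI : L.Structure ↥(π ⁻¹' N.carrier) := (permEquivSet π N.carrier).symm.inducedStructure
  (permEquivSet π N.carrier).symm.inducedStructureEquiv.symm

theorem exists_strEquiv_mapsTo (N : SmallModel L α T) {ι : Type*} [Finite ι] {d c : ι → α}
    (hc : ∀ i, c i ∈ N.carrier) (h : ∀ i j, d i = d j ↔ c i = c j) :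
    ∃ (A : SmallModel L α T) (f : StrEquiv A N), f.MapsTo d c := by
  obtain ⟨π, hπ⟩ := exists_perm_apply_eq h
  exact ⟨permModel π N, permIso π N,
    fun i => ⟨show π (d i) ∈ N.carrier from (hπ i).symm ▸ hc i, hπ i⟩⟩

end Transport

namespace SheafPt

variable {T : L.Theory} {n : ℕ} {φ : L.Formula (Fin n)}

theorem continuous_model : Continuous (SheafPt.model : SheafPt (α := α) T φ → _) := by
  refine continuous_generateFrom_iff.2 ?_
  rintro _ ⟨m, ψ, b, rfl⟩
  refine TopologicalSpace.GenerateOpen.basic _ ⟨m, ψ.relabel Sum.inr, b, ?_⟩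
  ext p
  exact exists_congr fun _ => by rw [SmallModel.sat_relabel]; rfl

theorem isOpen_sheafBasic {m : ℕ} (ψ : L.Formula (Fin n ⊕ Fin m)) (b : Fin m → α) :
    IsOpen (sheafBasic (T := T) φ ψ b) :=
  TopologicalSpace.GenerateOpen.basic _ ⟨m, ψ, b, rfl⟩

theorem mem_sheafBasic_patternFormula {m : ℕ} {d : Fin n ⊕ Fin m → α} {e : Fin m → α}
    {p : SheafPt (α := α) T φ} :
    p ∈ sheafBasic φ (patternFormula d) e ↔ (∀ j, e j ∈ p.model.carrier) ∧
      ∀ i j, d i = d j ↔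
        Sum.elim (fun k => (p.elem k : α)) e i = Sum.elim (fun k => (p.elem k : α)) e j := by
  have hval : ∀ (h : ∀ j, e j ∈ p.model.carrier) k,
      ((Sum.elim p.elem fun j => ⟨e j, h j⟩) k : α) = Sum.elim (fun k => (p.elem k : α)) e k := by
    intro h k; cases k <;> rfl
  simp only [sheafBasic, mem_ofPred_eq, SmallModel.sat_patternFormula, hval, exists_prop]

theorem exists_nhds_strEquiv (p : SheafPt (α := α) T φ) {A : SmallModel L α T}
    (f : StrEquiv A p.model) {a : Fin n → α} (ha : f.MapsTo a fun i => p.elem i) {l : ℕ}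
    {s t : Fin l → α} (hst : f.MapsTo s t) {W : Set (SmallModel L α T)} (hW : IsOpen W)
    (hA : A ∈ W) :
    ∃ U : Set (SheafPt (α := α) T φ), IsOpen U ∧ p ∈ U ∧ ∀ p' ∈ U,
      ∃ (A' : SmallModel L α T) (f' : StrEquiv A' p'.model),
        A' ∈ W ∧ f'.MapsTo a (fun i => p'.elem i) ∧ f'.MapsTo s t := by
  obtain ⟨m, χ, e, hAe, heW⟩ := exists_XBasic_subset hW hA
  obtain ⟨e', he⟩ : ∃ e', f.MapsTo e e' := ⟨fun i => f.fn ⟨e i, hAe.1 i⟩, fun i => ⟨_, rfl⟩⟩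
  have hd : f.MapsTo (Sum.elim a (Fin.append e s))
      (Sum.elim (fun i => (p.elem i : α)) (Fin.append e' t)) :=
    StrEquiv.mapsTo_sumElim.2 ⟨ha, StrEquiv.mapsTo_append.2 ⟨he, hst⟩⟩
  refine ⟨sheafBasic φ (patternFormula (Sum.elim a (Fin.append e s))) (Fin.append e' t) ∩
      SheafPt.model ⁻¹' XBasic χ e',
    (isOpen_sheafBasic _ _).inter ((isOpen_XBasic χ e').preimage continuous_model),
    ⟨mem_sheafBasic_patternFormula.2 ⟨fun j => hd.mem (Sum.inr j), hd.eq_iff⟩,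
      (he.mem_XBasic_iff χ).1 hAe⟩, ?_⟩
  rintro p' ⟨hp', hχ⟩
  rw [mem_sheafBasic_patternFormula] at hp'
  obtain ⟨A', f', hf'⟩ := exists_strEquiv_mapsTo p'.model
    (Sum.forall.2 ⟨fun i => (p'.elem i).2, hp'.1⟩) hp'.2
  obtain ⟨ha', he', hs'⟩ : f'.MapsTo a _ ∧ f'.MapsTo e e' ∧ f'.MapsTo s t := by
    rwa [StrEquiv.mapsTo_sumElim, StrEquiv.mapsTo_append] at hf'
  exact ⟨A', f', heW ((he'.mem_XBasic_iff χ).2 hχ), ha', hs'⟩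

end SheafPt

namespace EquivSheaf

variable {T : L.Theory} (E : EquivSheaf L α T)

theorem act_congr {g g' : ModelIso L α T} {z z' : E.R} (hg : g = g') (hz : z = z')
    (h : E.r z = g.src) (h' : E.r z' = g'.src) : E.act ⟨(g, z), h⟩ = E.act ⟨(g', z'), h'⟩ := by
  subst hg hz
  rfl

theorem exists_GBasic_act_mem {O : Set E.R} (hO : IsOpen O) (g : ModelIso L α T) (z : E.R)
    (hz : E.r z = g.src) (h : E.act ⟨(g, z), hz⟩ ∈ O) :
    ∃ G ∈ gBasicSets L α T, ∃ O' : Set E.R, g ∈ G ∧ IsOpen O' ∧ z ∈ O' ∧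
      ∀ g' z' (hz' : E.r z' = g'.src), g' ∈ G → z' ∈ O' → E.act ⟨(g', z'), hz'⟩ ∈ O := by
  obtain ⟨P, hP, hPO⟩ := isOpen_induced_iff.mp (hO.preimage E.continuous_act)
  have hmem : ∀ g' z' (hz' : E.r z' = g'.src), (g', z') ∈ P ↔ E.act ⟨(g', z'), hz'⟩ ∈ O :=
    fun g' z' hz' => Set.ext_iff.1 hPO ⟨(g', z'), hz'⟩
  obtain ⟨W, O', hW, hO', hgW, hzO', hWO'⟩ := isOpen_prod_iff.mp hP g z ((hmem g z hz).2 h)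
  obtain ⟨G, hG, hgG, hGW⟩ := exists_GBasic_subset hW hgW
  exact ⟨G, hG, O', hgG, hO', hzO', fun g' z' hz' hg' hz'O' =>
    (hmem g' z' hz').1 (hWO' (mk_mem_prod (hGW hg') hz'O'))⟩

structure StableSection (x₀ : E.R) where
  k : ℕ
  Ψ : L.Formula (Fin k)
  a : Fin k → α
  σ : SmallModel L α T → E.R
  continuousOn : ContinuousOn σ (XBasic Ψ a)
  r_σ : ∀ M ∈ XBasic Ψ a, E.r (σ M) = M
  r_mem : E.r x₀ ∈ XBasic Ψ a
  σ_r : σ (E.r x₀) = x₀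
  act_σ : ∀ (g : ModelIso L α T) (hg : g.src ∈ XBasic Ψ a), g.tgt ∈ XBasic Ψ a →
    g.iso.MapsTo a a → E.act ⟨(g, σ g.src), r_σ _ hg⟩ = σ g.tgt

theorem nonempty_stableSection (x₀ : E.R) : Nonempty (E.StableSection x₀) := by
  obtain ⟨e, hx₀, hre⟩ := E.isLocalHomeomorph_r x₀
  have hx₀' : E.act ⟨(ModelIso.idIso (E.r x₀), x₀), rfl⟩ ∈ e.source := by
    rw [E.act_id]; exact hx₀
  obtain ⟨_, ⟨_, ⟨n₁, φ₁, b₁, rfl⟩, _, ⟨n₂, φ₂, b₂, rfl⟩, l, s, t, rfl⟩, O, ⟨hsrc, htgt, hst⟩,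
    hO, hx₀O, hact⟩ := E.exists_GBasic_act_mem e.open_source _ x₀ rfl hx₀'
  obtain rfl := ModelIso.eq_of_idIso_mapsTo hst
  have hσx₀ : e.symm (E.r x₀) = x₀ := hre ▸ e.left_inv hx₀
  set W := e.target ∩ e.symm ⁻¹' O ∩ (XBasic φ₁ b₁ ∩ XBasic φ₂ b₂)
  have hW : IsOpen W := (e.continuousOn_symm.isOpen_inter_preimage e.open_target hO).inter
    ((isOpen_XBasic _ _).inter (isOpen_XBasic _ _))
  have hx₀W : E.r x₀ ∈ W := ⟨⟨hre ▸ e.map_source hx₀, by rwa [mem_preimage, hσx₀]⟩, hsrc, htgt⟩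
  obtain ⟨m, χ, d, hd, hdW⟩ := exists_XBasic_subset hW hx₀W
  -- `s` joins the parameters so that arrows fixing them lie near the identity
  have hsub : XBasic (χ.relabel (Fin.castAdd l) ⊓ (⊤ : L.Formula (Fin l)).relabel (Fin.natAdd m))
      (Fin.append d s) ⊆ W := by
    rw [← XBasic_inter]; exact fun M hM => hdW hM.1
  refine ⟨⟨m + l, _, Fin.append d s, e.symm, e.continuousOn_symm.mono fun M hM => (hsub hM).1.1,
    fun M hM => hre ▸ e.right_inv (hsub hM).1.1, ?_, hσx₀, ?_⟩⟩
  · rw [← XBasic_inter]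
    exact ⟨hd, fun i => (hst i).1, SmallModel.sat_top⟩
  · intro g hg hg' hfix
    have hy := hact g _ (hre ▸ e.right_inv (hsub hg).1.1) ⟨(hsub hg).2.1, (hsub hg').2.2,
      (StrEquiv.mapsTo_append.1 hfix).2⟩ (hsub hg).1.2
    exact (e.left_inv hy).symm.trans
      (congrArg e.symm ((congrFun hre _).symm.trans (E.r_act _)))

end EquivSheaf

namespace EquivSheaf.StableSection

variable {T : L.Theory} {E : EquivSheaf L α T} {x₀ : E.R} (S : E.StableSection x₀)

noncomputable def xi : L.Formula (Fin S.k) :=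
  S.Ψ ⊓ patternFormula S.a

theorem act_σ_eq {A B N : SmallModel L α T} (f : StrEquiv A N) (g : StrEquiv B N)
    (hA : A ∈ XBasic S.Ψ S.a) (hB : B ∈ XBasic S.Ψ S.a) {c : Fin S.k → α}
    (hf : f.MapsTo S.a c) (hg : g.MapsTo S.a c) :
    E.act ⟨(⟨A, N, f⟩, S.σ A), S.r_σ A hA⟩ = E.act ⟨(⟨B, N, g⟩, S.σ B), S.r_σ B hB⟩ :=
  calc E.act ⟨(⟨A, N, f⟩, S.σ A), S.r_σ A hA⟩
      = E.act ⟨(⟨A, N, g.comp (g.symm.comp f)⟩, S.σ A), S.r_σ A hA⟩ :=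
        E.act_congr (by rw [StrEquiv.comp_symm_comp]) rfl _ _
    _ = E.act ⟨(⟨B, N, g⟩, E.act ⟨(⟨A, B, g.symm.comp f⟩, S.σ A), S.r_σ A hA⟩), E.r_act _⟩ :=
        (E.act_comp _ _ _ _ _ _ _).symm
    _ = E.act ⟨(⟨B, N, g⟩, S.σ B), S.r_σ B hB⟩ :=
        E.act_congr rfl (S.act_σ ⟨A, B, _⟩ hA hB (hf.comp hg.symm)) _ _

theorem exists_strEquiv (p : SheafPt (α := α) T S.xi) :
    ∃ (A : SmallModel L α T) (f : StrEquiv A p.model),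
      A ∈ XBasic S.Ψ S.a ∧ f.MapsTo S.a fun i => p.elem i := by
  obtain ⟨hΨ, hpat⟩ := SmallModel.sat_inf.1 p.sat
  obtain ⟨A, f, hf⟩ := exists_strEquiv_mapsTo p.model (fun i => (p.elem i).2)
    (SmallModel.sat_patternFormula.1 hpat)
  exact ⟨A, f, (hf.mem_XBasic_iff S.Ψ).2 ⟨fun i => (p.elem i).2, hΨ⟩, hf⟩

noncomputable def sheafMap (p : SheafPt (α := α) T S.xi) : E.R :=
  E.act ⟨(⟨_, p.model, (S.exists_strEquiv p).choose_spec.choose⟩, S.σ _),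
    S.r_σ _ (S.exists_strEquiv p).choose_spec.choose_spec.1⟩

theorem sheafMap_eq (p : SheafPt (α := α) T S.xi) {A : SmallModel L α T}
    (f : StrEquiv A p.model) (hA : A ∈ XBasic S.Ψ S.a) (hf : f.MapsTo S.a fun i => p.elem i) :
    S.sheafMap p = E.act ⟨(⟨A, p.model, f⟩, S.σ A), S.r_σ A hA⟩ :=
  S.act_σ_eq _ f (S.exists_strEquiv p).choose_spec.choose_spec.1 hA
    (S.exists_strEquiv p).choose_spec.choose_spec.2 hf

theorem r_sheafMap (p : SheafPt (α := α) T S.xi) : E.r (S.sheafMap p) = p.model :=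
  E.r_act _

theorem sheafMap_theta (q : ActionPt (α := α) T S.xi) :
    S.sheafMap (theta S.xi q) = E.act ⟨(q.g, S.sheafMap q.pt), S.r_sheafMap q.pt⟩ := by
  obtain ⟨A, f, hA, hf⟩ := S.exists_strEquiv q.pt
  calc S.sheafMap (theta S.xi q)
      = E.act ⟨(⟨A, q.g.tgt, q.g.iso.comp f⟩, S.σ A), S.r_σ A hA⟩ :=
        S.sheafMap_eq _ _ hA (hf.comp (q.g.iso.mapsTo_coe q.elem))
    _ = E.act ⟨(q.g, E.act ⟨(⟨A, q.g.src, f⟩, S.σ A), S.r_σ A hA⟩), E.r_act _⟩ :=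
        (E.act_comp _ _ _ _ _ _ _).symm
    _ = _ := E.act_congr rfl (S.sheafMap_eq q.pt f hA hf).symm _ _

theorem exists_sheafMap_eq : ∃ p, S.sheafMap p = x₀ := by
  refine ⟨⟨E.r x₀, fun i => ⟨S.a i, S.r_mem.1 i⟩,
    SmallModel.sat_inf.2 ⟨S.r_mem.2, SmallModel.sat_patternFormula.2 fun _ _ => Iff.rfl⟩⟩, ?_⟩
  rw [S.sheafMap_eq _ (ModelIso.idIso (E.r x₀)).iso S.r_mem fun i => ⟨S.r_mem.1 i, rfl⟩]
  exact (E.act_congr rfl S.σ_r _ rfl).trans (E.act_id x₀)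

theorem continuous_sheafMap : Continuous S.sheafMap := by
  refine continuous_def.2 fun O hO => isOpen_iff_forall_mem_open.2 fun p hp => ?_
  obtain ⟨A, f, hA, hf⟩ := S.exists_strEquiv p
  rw [mem_preimage, S.sheafMap_eq p f hA hf] at hp
  obtain ⟨_, ⟨_, ⟨n₁, φ₁, b₁, rfl⟩, _, ⟨n₂, φ₂, b₂, rfl⟩, l, s, t, rfl⟩, O', ⟨hA₁, hN₂, hst⟩,
    hO', hσO', hact⟩ := E.exists_GBasic_act_mem hO _ _ _ hp
  have hW : IsOpen (XBasic S.Ψ S.a ∩ S.σ ⁻¹' O' ∩ XBasic φ₁ b₁) :=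
    (S.continuousOn.isOpen_inter_preimage (isOpen_XBasic _ _) hO').inter (isOpen_XBasic _ _)
  obtain ⟨U, hU, hpU, hUW⟩ := p.exists_nhds_strEquiv f hf hst hW ⟨⟨hA, hσO'⟩, hA₁⟩
  refine ⟨U ∩ SheafPt.model ⁻¹' XBasic φ₂ b₂, ?_,
    hU.inter ((isOpen_XBasic _ _).preimage SheafPt.continuous_model), hpU, hN₂⟩
  rintro p' ⟨hp'U, hp'₂⟩
  obtain ⟨A', f', ⟨⟨hA', hσA'⟩, hA'₁⟩, hf', hst'⟩ := hUW p' hp'U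
  rw [mem_preimage, S.sheafMap_eq p' f' hA' hf']
  exact hact _ _ _ ⟨hA'₁, hp'₂, hst'⟩ hσA'

end EquivSheaf.StableSection

/-- **The definable equivariant sheaves generate**: for any equivariant sheaf
`(r : R → X_T, ρ)` on `G_T ⇉ X_T` and any `x₀ ∈ R`, there is a formula `ξ` and a
continuous equivariant map `v̂ : ⟦ξ⟧ → R` over `X_T` with `x₀` in its image. -/
theorem definable_sheaves_generate {T : L.Theory} (E : EquivSheaf.{u, v, w, x} L α T)
    (x₀ : E.R) :
    ∃ (n : ℕ) (ξ : L.Formula (Fin n)) (v : SheafPt (α := α) T ξ → E.R)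
      (hsec : ∀ p : SheafPt (α := α) T ξ, E.r (v p) = p.model),
      Continuous v ∧ (∃ p, v p = x₀) ∧
      ∀ q : ActionPt (α := α) T ξ,
        v (theta ξ q) = E.act ⟨(q.g, v q.pt), hsec q.pt⟩ := by
  obtain ⟨S⟩ := E.nonempty_stableSection x₀
  exact ⟨S.k, S.xi, S.sheafMap, S.r_sheafMap, S.continuous_sheafMap, S.exists_sheafMap_eq,
    S.sheafMap_theta⟩
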